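/- Every tight sequence (W_n)_{n=1}^∞ of multigraphons contains a convergent subsequence: if lim_{m→∞} sup_n ∫₀¹∫₀¹ ∑_{k=m}^∞ W_n(x,y,k) dx dy = 0 and lim_{m→∞} sup_n ∫₀¹ ∑_{k=m}^∞ W_n(x,x,k) dx = 0, then there is a subsequence (W_{n(m)})_{m=1}^∞ and a non-defective multigraph parameter f such that t_≤(A,W_{n(m)}) → f(A) as m → ∞ for every k ∈ ℕ and A ∈ A_k. -/

import Mathlib

open scoped Classical BigOperators
open Filter MeasureTheory

/-- `A ∈ A_k`: adjacency matrix of a multigraph on `k` labeled vertices. -/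
def IsAdj {k : ℕ} (A : Matrix (Fin k) (Fin k) ℕ) : Prop :=
  (∀ i j, A i j = A j i) ∧ ∀ i, Even (A i i)

/-- number of edges `e(A) = (1/2) ∑_{i,j} A i j`. -/
def numEdges {k : ℕ} (A : Matrix (Fin k) (Fin k) ℕ) : ℕ :=
  (∑ i, ∑ j, A i j) / 2

/-- A multigraphon: a measurable `W : [0,1]×[0,1]×ℕ₀ → [0,1]` which is symmetric,
whose values at each point of `[0,1]²` sum to `1` over `ℕ₀`, and which vanishes on the
diagonal for odd multiplicities. -/
structure Multigraphon where
  W : ℝ → ℝ → ℕ → ℝ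
  measurable : ∀ m : ℕ, Measurable fun p : ℝ × ℝ => W p.1 p.2 m
  nonneg : ∀ x y m, 0 ≤ W x y m
  le_one : ∀ x y m, W x y m ≤ 1
  symm : ∀ x y m, W x y m = W y x m
  sum_one : ∀ x ∈ Set.Icc (0:ℝ) 1, ∀ y ∈ Set.Icc (0:ℝ) 1, ∑' m : ℕ, W x y m = 1
  diag_odd : ∀ x ∈ Set.Icc (0:ℝ) 1, ∀ m : ℕ, W x x (2 * m + 1) = 0

/-- `t_≤(A,W) = ∫_{[0,1]^k} ∏_{1≤i≤j≤k} (∑_{l=A(i,j)}^∞ W(x_i,x_j,l)) dx₁⋯dx_k`. -/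
noncomputable def tleW {k : ℕ} (A : Matrix (Fin k) (Fin k) ℕ) (G : Multigraphon) : ℝ :=
  ∫ x : Fin k → ℝ in Set.univ.pi fun _ => Set.Icc (0:ℝ) 1,
    ∏ p ∈ Finset.univ.filter (fun p : Fin k × Fin k => p.1 ≤ p.2),
      ∑' l : ℕ, G.W (x p.1) (x p.2) (A p.1 p.2 + l)

/-!
The densities `t_≤(A, W_n)`, one for each of the countably many pairs `(k, A)`, lie in `[0, 1]`,
so by compactness of a countable power of `[0, 1]` some subsequence makes all of them converge;
relabeling invariance of `t_≤` for symmetric `A` passes to the limit `f`. For non-defectiveness bound the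
integrand by its single factor at a largest entry `a = A(i, j)`: by independence of the
coordinates this gives `t_≤(A, W_n) ≤ ∫∫ ∑_{l ≥ a} W_n(x, y, l)` if `i ≠ j` and
`≤ ∫ ∑_{l ≥ a} W_n(x, x, l)` if `i = j`. As `e(A) ≤ k² a`, the largest entry tends to infinity
with `e(A)`, and tightness makes these bounds tend to `0` uniformly in `n`.
-/

theorem Finset.prod_filter_le_eq_prod_sym2 {ι M : Type*} [LinearOrder ι] [Fintype ι]
    [CommMonoid M] (g : ι → ι → M) (hg : ∀ i j, g i j = g j i) :
    ∏ p ∈ Finset.univ.filter (fun p : ι × ι => p.1 ≤ p.2), g p.1 p.2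
      = ∏ z : Sym2 ι, Sym2.lift ⟨g, hg⟩ z := by
  rw [← Finset.prod_subtype_eq_prod_filter, Finset.subtype_univ]
  exact Fintype.prod_equiv Sym2.sortEquiv.symm _ _ fun _ => rfl

theorem Finset.prod_filter_le_comp_perm {ι M : Type*} [LinearOrder ι] [Fintype ι]
    [CommMonoid M] (σ : Equiv.Perm ι) (g : ι → ι → M) (hg : ∀ i j, g i j = g j i) :
    ∏ p ∈ Finset.univ.filter (fun p : ι × ι => p.1 ≤ p.2), g (σ p.1) (σ p.2)
      = ∏ p ∈ Finset.univ.filter (fun p : ι × ι => p.1 ≤ p.2), g p.1 p.2 := by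
  rw [Finset.prod_filter_le_eq_prod_sym2 _ fun i j => hg (σ i) (σ j),
    Finset.prod_filter_le_eq_prod_sym2 g hg]
  refine Fintype.prod_bijective (Sym2.map σ) ?_ _ _ fun z => ?_
  · exact Function.bijective_iff_has_inverse.2 ⟨Sym2.map σ.symm,
      fun z => by simp [Sym2.map_map], fun z => by simp [Sym2.map_map]⟩
  · induction z with | _ i j => rfl

namespace Multigraphon

variable (G : Multigraphon)

noncomputable def tail (a : ℕ) (x y : ℝ) : ℝ := ∑' l, G.W x y (a + l)

theorem tail_nonneg (a : ℕ) (x y : ℝ) : 0 ≤ G.tail a x y :=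
  tsum_nonneg fun _ => G.nonneg _ _ _

theorem tail_symm (a : ℕ) (x y : ℝ) : G.tail a x y = G.tail a y x :=
  tsum_congr fun _ => G.symm _ _ _

theorem measurable_tail (a : ℕ) : Measurable fun p : ℝ × ℝ => G.tail a p.1 p.2 :=
  Measurable.tsum fun _ => G.measurable _

theorem tail_le_one (a : ℕ) {x y : ℝ} (hx : x ∈ Set.Icc (0:ℝ) 1) (hy : y ∈ Set.Icc (0:ℝ) 1) :
    G.tail a x y ≤ 1 := by
  have hsum : Summable (G.W x y) := by
    by_contra h
    exact zero_ne_one ((tsum_eq_zero_of_not_summable h).symm.trans (G.sum_one x hx y hy))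
  calc G.tail a x y ≤ ∑' l, G.W x y l :=
        tsum_comp_le_tsum_of_inj hsum (G.nonneg x y) (add_right_injective a)
    _ = 1 := G.sum_one x hx y hy

end Multigraphon

theorem MeasureTheory.integral_mem_Icc_zero_one {α : Type*} [MeasurableSpace α] {μ : Measure α}
    [IsProbabilityMeasure μ] {f : α → ℝ} (hf : ∀ᵐ x ∂μ, f x ∈ Set.Icc (0:ℝ) 1) :
    ∫ x, f x ∂μ ∈ Set.Icc (0:ℝ) 1 := by
  refine ⟨integral_nonneg_of_ae (hf.mono fun _ hx => hx.1), ?_⟩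
  have h := norm_integral_le_of_norm_le_const (hf.mono fun x hx =>
    (Real.norm_of_nonneg hx.1).trans_le hx.2)
  simp only [probReal_univ, mul_one] at h
  exact (le_abs_self _).trans h

local notation "μ₀₁" => Measure.restrict (volume : Measure ℝ) (Set.Icc (0:ℝ) 1)

instance : IsProbabilityMeasure μ₀₁ :=
  ⟨by rw [Measure.restrict_apply_univ, Real.volume_Icc, sub_zero, ENNReal.ofReal_one]⟩

theorem ae_forall_mem_Icc_pi (ι : Type*) [Fintype ι] :
    ∀ᵐ x ∂Measure.pi fun _ : ι => μ₀₁, ∀ i, x i ∈ Set.Icc (0:ℝ) 1 :=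
  ae_all_iff.2 fun _ => Measure.tendsto_eval_ae_ae.eventually (ae_restrict_mem measurableSet_Icc)

section Density

variable {k : ℕ} (A : Matrix (Fin k) (Fin k) ℕ) (G : Multigraphon)

noncomputable def tleWIntegrand (x : Fin k → ℝ) : ℝ :=
  ∏ p ∈ Finset.univ.filter (fun p : Fin k × Fin k => p.1 ≤ p.2),
    G.tail (A p.1 p.2) (x p.1) (x p.2)

theorem tleW_eq_integral_pi :
    tleW A G = ∫ x, tleWIntegrand A G x ∂Measure.pi fun _ => μ₀₁ := by
  rw [tleW, volume_pi, Measure.restrict_pi_pi]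
  rfl

theorem measurable_tail_comp_eval (a : ℕ) (i j : Fin k) :
    Measurable fun x : Fin k → ℝ => G.tail a (x i) (x j) :=
  (G.measurable_tail a).comp (f := fun x : Fin k → ℝ => (x i, x j)) (by fun_prop)

theorem measurable_tleWIntegrand : Measurable (tleWIntegrand A G) :=
  Finset.measurable_prod _ fun p _ => measurable_tail_comp_eval G _ p.1 p.2

theorem tleWIntegrand_mem_Icc {x : Fin k → ℝ} (hx : ∀ i, x i ∈ Set.Icc (0:ℝ) 1) :
    tleWIntegrand A G x ∈ Set.Icc (0:ℝ) 1 :=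
  ⟨Finset.prod_nonneg fun _ _ => G.tail_nonneg _ _ _,
    Finset.prod_le_one (fun _ _ => G.tail_nonneg _ _ _) fun p _ =>
      G.tail_le_one _ (hx p.1) (hx p.2)⟩

theorem integrable_tleWIntegrand : Integrable (tleWIntegrand A G) (Measure.pi fun _ => μ₀₁) :=
  Integrable.of_mem_Icc 0 1 (measurable_tleWIntegrand A G).aemeasurable
    ((ae_forall_mem_Icc_pi _).mono fun _ => tleWIntegrand_mem_Icc A G)

theorem tleW_mem_Icc : tleW A G ∈ Set.Icc (0:ℝ) 1 := by
  rw [tleW_eq_integral_pi]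
  exact integral_mem_Icc_zero_one ((ae_forall_mem_Icc_pi _).mono fun _ => tleWIntegrand_mem_Icc A G)

end Density

section Relabeling

variable {k : ℕ} {A : Matrix (Fin k) (Fin k) ℕ} (G : Multigraphon) (σ : Equiv.Perm (Fin k))

theorem tleWIntegrand_perm (hA : ∀ i j, A i j = A j i) (x : Fin k → ℝ) :
    tleWIntegrand (Matrix.of fun i j => A (σ i) (σ j)) G x
      = tleWIntegrand A G (MeasurableEquiv.piCongrLeft (fun _ => ℝ) σ x) := by
  set y := MeasurableEquiv.piCongrLeft (fun _ => ℝ) σ x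
  have hy : ∀ i, y (σ i) = x i := Equiv.piCongrLeft_apply_apply (fun _ => ℝ) σ x
  rw [tleWIntegrand, tleWIntegrand, ← Finset.prod_filter_le_comp_perm σ
    (fun i j => G.tail (A i j) (y i) (y j)) fun i j => by rw [hA, G.tail_symm]]
  simp only [Matrix.of_apply, hy]

theorem tleW_perm (hA : ∀ i j, A i j = A j i) :
    tleW (Matrix.of fun i j => A (σ i) (σ j)) G = tleW A G := by
  simp only [tleW_eq_integral_pi, tleWIntegrand_perm G σ hA]
  exact (measurePreserving_piCongrLeft (fun _ => μ₀₁) σ).integral_comp' (tleWIntegrand A G)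

end Relabeling

theorem MeasureTheory.Measure.map_eval_prodMk_pi {ι : Type*} [Fintype ι] {α : ι → Type*}
    [∀ i, MeasurableSpace (α i)] (μ : ∀ i, Measure (α i)) [∀ i, IsProbabilityMeasure (μ i)]
    {i j : ι} (hij : i ≠ j) :
    (Measure.pi μ).map (fun x => (x i, x j)) = (μ i).prod (μ j) := by
  have h := ((ProbabilityTheory.iIndepFun_pi (μ := μ) (X := fun _ => id)
    fun _ => aemeasurable_id).indepFun hij).map_prod_eq_prod_map_map
    (measurable_pi_apply i).aemeasurable (measurable_pi_apply j).aemeasurable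
  rwa [(measurePreserving_eval μ i).map_eq, (measurePreserving_eval μ j).map_eq] at h

theorem MeasureTheory.integral_comp_eval_prodMk_pi {ι : Type*} [Fintype ι] {α : ι → Type*}
    [∀ i, MeasurableSpace (α i)] (μ : ∀ i, Measure (α i)) [∀ i, IsProbabilityMeasure (μ i)]
    {i j : ι} (hij : i ≠ j) {E : Type*} [NormedAddCommGroup E] [NormedSpace ℝ E]
    {f : α i × α j → E} (hf : AEStronglyMeasurable f ((μ i).prod (μ j))) :
    ∫ x, f (x i, x j) ∂Measure.pi μ = ∫ z, f z ∂(μ i).prod (μ j) := by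
  rw [← Measure.map_eval_prodMk_pi μ hij] at hf ⊢
  exact (integral_map (by fun_prop) hf).symm

section Tightness

variable {k : ℕ} {A : Matrix (Fin k) (Fin k) ℕ} (G : Multigraphon)

theorem integrable_tail_comp_eval (a : ℕ) (i j : Fin k) :
    Integrable (fun x : Fin k → ℝ => G.tail a (x i) (x j)) (Measure.pi fun _ => μ₀₁) :=
  Integrable.of_mem_Icc 0 1 (measurable_tail_comp_eval G a i j).aemeasurable
    ((ae_forall_mem_Icc_pi _).mono fun _ hx => ⟨G.tail_nonneg _ _ _, G.tail_le_one a (hx i) (hx j)⟩)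

theorem integrable_tail_prod (a : ℕ) :
    Integrable (fun z : ℝ × ℝ => G.tail a z.1 z.2) (Measure.prod μ₀₁ μ₀₁) := by
  have hmem : ∀ᵐ z ∂Measure.prod μ₀₁ μ₀₁, z ∈ Set.Icc (0:ℝ) 1 ×ˢ Set.Icc (0:ℝ) 1 := by
    rw [Measure.prod_restrict]
    exact ae_restrict_mem (measurableSet_Icc.prod measurableSet_Icc)
  exact Integrable.of_mem_Icc 0 1 (G.measurable_tail a).aemeasurable
    (hmem.mono fun _ hz => ⟨G.tail_nonneg _ _ _, G.tail_le_one a hz.1 hz.2⟩)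

theorem tleW_le_integral_tail {i j : Fin k} (hij : i ≤ j) :
    tleW A G ≤ ∫ x, G.tail (A i j) (x i) (x j) ∂Measure.pi fun _ => μ₀₁ := by
  rw [tleW_eq_integral_pi]
  refine integral_mono_ae (integrable_tleWIntegrand A G) (integrable_tail_comp_eval G _ i j)
    ((ae_forall_mem_Icc_pi _).mono fun x hx => ?_)
  have hmem : (i, j) ∈ Finset.univ.filter (fun p : Fin k × Fin k => p.1 ≤ p.2) := by simpa
  rw [tleWIntegrand, ← Finset.mul_prod_erase _ _ hmem]
  exact mul_le_of_le_one_right (G.tail_nonneg _ _ _) (Finset.prod_le_one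
    (fun _ _ => G.tail_nonneg _ _ _) fun p _ => G.tail_le_one _ (hx p.1) (hx p.2))

theorem tleW_le_integral_tail_diag (i : Fin k) :
    tleW A G ≤ ∫ x in Set.Icc (0:ℝ) 1, G.tail (A i i) x x := by
  refine (tleW_le_integral_tail G (le_refl i)).trans_eq ?_
  exact integral_comp_eval (μ := fun _ => μ₀₁) (i := i) (f := fun u => G.tail (A i i) u u)
    ((G.measurable_tail _).comp (f := fun u : ℝ => (u, u)) (by fun_prop)).aestronglyMeasurable

theorem tleW_le_integral_tail_of_ne (hA : ∀ i j, A i j = A j i) {i j : Fin k} (hij : i ≠ j) :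
    tleW A G ≤ ∫ x in Set.Icc (0:ℝ) 1, ∫ y in Set.Icc (0:ℝ) 1, G.tail (A i j) x y := by
  wlog h : i < j generalizing i j
  · rw [hA]
    exact this hij.symm (lt_of_le_of_ne (not_lt.1 h) hij.symm)
  refine (tleW_le_integral_tail G h.le).trans_eq ?_
  rw [integral_comp_eval_prodMk_pi (fun _ => μ₀₁) h.ne (f := fun z => G.tail (A i j) z.1 z.2)
    (G.measurable_tail _).aestronglyMeasurable]
  exact integral_prod _ (integrable_tail_prod G _)

theorem integral_integral_tail_mem_Icc (a : ℕ) :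
    ∫ x in Set.Icc (0:ℝ) 1, ∫ y in Set.Icc (0:ℝ) 1, G.tail a x y ∈ Set.Icc (0:ℝ) 1 :=
  integral_mem_Icc_zero_one ((ae_restrict_mem measurableSet_Icc).mono fun _ hx =>
    integral_mem_Icc_zero_one ((ae_restrict_mem measurableSet_Icc).mono fun _ hy =>
      ⟨G.tail_nonneg _ _ _, G.tail_le_one a hx hy⟩))

theorem integral_tail_diag_mem_Icc (a : ℕ) :
    ∫ x in Set.Icc (0:ℝ) 1, G.tail a x x ∈ Set.Icc (0:ℝ) 1 :=
  integral_mem_Icc_zero_one ((ae_restrict_mem measurableSet_Icc).mono fun _ hx =>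
    ⟨G.tail_nonneg _ _ _, G.tail_le_one a hx hx⟩)

theorem tleW_le_iSup_add_iSup (G : ℕ → Multigraphon) (hA : ∀ i j, A i j = A j i) (n : ℕ)
    (i j : Fin k) :
    tleW A (G n) ≤ (⨆ n, ∫ x in Set.Icc (0:ℝ) 1, ∫ y in Set.Icc (0:ℝ) 1, (G n).tail (A i j) x y)
      + ⨆ n, ∫ x in Set.Icc (0:ℝ) 1, (G n).tail (A i j) x x := by
  have hbdd₁ : BddAbove (Set.range fun n =>
      ∫ x in Set.Icc (0:ℝ) 1, ∫ y in Set.Icc (0:ℝ) 1, (G n).tail (A i j) x y) :=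
    ⟨1, Set.forall_mem_range.2 fun n => (integral_integral_tail_mem_Icc (G n) _).2⟩
  have hbdd₂ : BddAbove (Set.range fun n => ∫ x in Set.Icc (0:ℝ) 1, (G n).tail (A i j) x x) :=
    ⟨1, Set.forall_mem_range.2 fun n => (integral_tail_diag_mem_Icc (G n) _).2⟩
  have h₁ := Real.iSup_nonneg fun n => (integral_integral_tail_mem_Icc (G n) (A i j)).1
  have h₂ := Real.iSup_nonneg fun n => (integral_tail_diag_mem_Icc (G n) (A i j)).1
  rcases eq_or_ne i j with rfl | hij
  · exact (tleW_le_integral_tail_diag _ i).trans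
      ((le_ciSup hbdd₂ n).trans (le_add_of_nonneg_left h₁))
  · exact (tleW_le_integral_tail_of_ne _ hA hij).trans
      ((le_ciSup hbdd₁ n).trans (le_add_of_nonneg_right h₂))

end Tightness

theorem exists_strictMono_tendsto_pi_of_mem_Icc {ι : Type*} [Countable ι] (u : ℕ → ι → ℝ)
    {a b : ℝ} (hu : ∀ n i, u n i ∈ Set.Icc a b) :
    ∃ φ : ℕ → ℕ, StrictMono φ ∧
      ∃ f : ι → ℝ, ∀ i, Tendsto (fun m => u (φ m) i) atTop (nhds (f i)) := by
  obtain ⟨f, -, φ, hφ, hconv⟩ := (isCompact_univ_pi fun _ => isCompact_Icc).tendsto_subseq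
    (x := u) fun n => Set.mem_univ_pi.2 (hu n)
  exact ⟨φ, hφ, f, tendsto_pi_nhds.1 hconv⟩

namespace Matrix

variable {m n : Type*} [Fintype m] [Fintype n] (A : Matrix m n ℕ)

def maxEntry : ℕ := Finset.univ.sup fun p : m × n => A p.1 p.2

theorem le_maxEntry (i : m) (j : n) : A i j ≤ A.maxEntry :=
  Finset.le_sup (f := fun p : m × n => A p.1 p.2) (Finset.mem_univ (i, j))

theorem exists_eq_maxEntry (h : 0 < A.maxEntry) : ∃ i j, A i j = A.maxEntry := by
  have hne : (Finset.univ : Finset (m × n)).Nonempty :=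
    Finset.nonempty_iff_ne_empty.2 fun h' => by simp [maxEntry, h'] at h
  obtain ⟨p, -, hp⟩ := Finset.exists_mem_eq_sup _ hne fun p : m × n => A p.1 p.2
  exact ⟨p.1, p.2, hp.symm⟩

end Matrix

theorem numEdges_le_mul_maxEntry {k : ℕ} (A : Matrix (Fin k) (Fin k) ℕ) :
    numEdges A ≤ k * k * A.maxEntry :=
  calc numEdges A ≤ ∑ i, ∑ j, A i j := Nat.div_le_self _ _
    _ ≤ ∑ _i : Fin k, ∑ _j : Fin k, A.maxEntry :=
      Finset.sum_le_sum fun i _ => Finset.sum_le_sum fun j _ => A.le_maxEntry i j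
    _ = k * k * A.maxEntry := by simp [mul_assoc]

theorem tendsto_maxEntry_of_tendsto_numEdges {k : ℕ} {A : ℕ → Matrix (Fin k) (Fin k) ℕ}
    (h : Tendsto (fun m => numEdges (A m)) atTop atTop) :
    Tendsto (fun m => (A m).maxEntry) atTop atTop := by
  refine tendsto_atTop_atTop.2 fun b => ?_
  obtain ⟨N, hN⟩ := tendsto_atTop_atTop.1 h (k * k * b + 1)
  exact ⟨N, fun m hm => (Nat.lt_of_mul_lt_mul_left
    (Nat.lt_of_succ_le ((hN m hm).trans (numEdges_le_mul_maxEntry _)))).le⟩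

/-- Every tight sequence of multigraphons contains a convergent subsequence. -/
theorem exists_convergent_subsequence_of_tight (Wseq : ℕ → Multigraphon)
    -- tightness
    (htight₁ : Tendsto (fun m : ℕ => ⨆ n : ℕ,
        ∫ x in Set.Icc (0:ℝ) 1, ∫ y in Set.Icc (0:ℝ) 1,
          ∑' l : ℕ, (Wseq n).W x y (m + l)) atTop (nhds 0))
    (htight₂ : Tendsto (fun m : ℕ => ⨆ n : ℕ,
        ∫ x in Set.Icc (0:ℝ) 1, ∑' l : ℕ, (Wseq n).W x x (m + l)) atTop (nhds 0)) :
    ∃ (φ : ℕ → ℕ) (f : ∀ k : ℕ, Matrix (Fin k) (Fin k) ℕ → ℝ),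
      StrictMono φ ∧
      -- `f` is a multigraph parameter: invariance under relabeling
      (∀ (k : ℕ) (σ : Equiv.Perm (Fin k)) (A : Matrix (Fin k) (Fin k) ℕ), IsAdj A →
        f k (Matrix.of fun i j => A (σ i) (σ j)) = f k A) ∧
      -- `f` is non-defective
      (∀ (k : ℕ) (A : ℕ → Matrix (Fin k) (Fin k) ℕ), (∀ m, IsAdj (A m)) →
        Tendsto (fun m => numEdges (A m)) atTop atTop →
        Tendsto (fun m => f k (A m)) atTop (nhds 0)) ∧
      -- the subsequence converges to `f`
      (∀ (k : ℕ) (A : Matrix (Fin k) (Fin k) ℕ), IsAdj A →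
        Tendsto (fun m => tleW A (Wseq (φ m))) atTop (nhds (f k A))) := by
  -- indexed by the underlying function type, since `Matrix` carries no `Countable` instance
  obtain ⟨φ, hφ, f, hf⟩ := exists_strictMono_tendsto_pi_of_mem_Icc
    (fun n (p : (k : ℕ) × (Fin k → Fin k → ℕ)) => tleW p.2 (Wseq n)) fun n p => tleW_mem_Icc _ _
  refine ⟨φ, fun k A => f ⟨k, A⟩, hφ, ?_, ?_, fun k A _ => hf ⟨k, A⟩⟩
  · intro k σ A hA
    exact tendsto_nhds_unique ((hf _).congr fun m => tleW_perm _ σ hA.1) (hf ⟨k, A⟩)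
  · intro k A hA hE
    have hc := tendsto_maxEntry_of_tendsto_numEdges hE
    have hbound := (htight₁.comp hc).add (htight₂.comp hc)
    rw [add_zero] at hbound
    refine tendsto_of_tendsto_of_tendsto_of_le_of_le' tendsto_const_nhds hbound
      (Eventually.of_forall fun m => ge_of_tendsto' (hf _) fun n => (tleW_mem_Icc _ _).1) ?_
    filter_upwards [hc.eventually_gt_atTop 0] with m hm
    obtain ⟨i, j, hij⟩ := (A m).exists_eq_maxEntry hm
    refine le_of_tendsto' (hf ⟨k, A m⟩) fun n => ?_
    have h := tleW_le_iSup_add_iSup Wseq (hA m).1 (φ n) i j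
    rw [hij] at h
    exact h
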